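/- arXiv:1708.08775 — 2 statements merged into one kernel-verified Lean document; each statement's English description precedes it below -/
import Mathlib

section
/- Suppose N is even, p > 2, ε' is a pairwise independent Rademacher vector, a' ∈ ℝ^N with ‖a'‖₂ = 1, and (E|∑ᵢ a'ᵢε'ᵢ|^p)^{1/p} = N^{1/2−1/p}. Then all |a'ᵢ| are equal (to 1/√N), and almost surely either ε'ᵢ = sgn(a'ᵢ) for all i, or ε'ᵢ = −sgn(a'ᵢ) for all i, or ε'ᵢ = sgn(a'ᵢ) for exactly half of the indices i. -/
/-!
For signs `εᵢ = ±1`, Cauchy–Schwarz gives `|∑ aᵢ εᵢ| ≤ ∑ |aᵢ| ≤ √N`, while pairwise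
independence gives `E (∑ aᵢ εᵢ)² = ∑ aᵢ² = 1`. Hence `S = ∑ aᵢ εᵢ` satisfies
`E |S|^p ≤ √N^(p-2) E S² = N^(p/2-1)`, and since `p > 2` equality forces `|S| ∈ {0, √N}` almost
surely. As `E S² = 1`, the value `|S| = √N` is attained, which is the equality case of
Cauchy–Schwarz: `|aᵢ| = 1/√N`. Then `√N S = ∑ sgn(aᵢ) εᵢ = 2 #{i | εᵢ = sgn aᵢ} - N`, so the
number of agreeing signs is `N/2`, `N` or `0`.
-/

open MeasureTheory ENNReal

noncomputable section

/-- A family `ε` of ±1-valued (Rademacher) random variables which is `k`-wise independent: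
every collection of at most `k` coordinates takes any prescribed pattern of signs with
probability `(1/2)^(number of coordinates)`. -/
def IsKWiseRademacher {Ω : Type*} [MeasurableSpace Ω] (μ : Measure Ω)
    {ι : Type*} [DecidableEq ι] (k : ℕ) (ε : ι → Ω → ℝ) : Prop :=
  (∀ i, Measurable (ε i)) ∧
  ∀ s : Finset ι, s.card ≤ k → ∀ σ : ι → ℝ, (∀ i, σ i = 1 ∨ σ i = -1) →
    μ {ω | ∀ i ∈ s, ε i ω = σ i} = (2 : ℝ≥0∞)⁻¹ ^ s.card

lemma abs_rpow_eq_abs_rpow_sub_two_mul_sq {p : ℝ} (hp : p ≠ 0) (x : ℝ) :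
    |x| ^ p = |x| ^ (p - 2) * x ^ 2 := by
  rw [← sq_abs, ← Real.rpow_natCast, ← Real.rpow_add' (abs_nonneg x) (by simpa using hp)]
  norm_num

lemma abs_rpow_le_rpow_sub_two_mul_sq {p M x : ℝ} (hp : 2 < p) (hx : |x| ≤ M) :
    |x| ^ p ≤ M ^ (p - 2) * x ^ 2 := by
  rw [abs_rpow_eq_abs_rpow_sub_two_mul_sq (by linarith) x]
  gcongr

lemma eq_zero_or_abs_eq_of_abs_rpow_eq {p M x : ℝ} (hp : 2 < p) (hx : |x| ≤ M)
    (h : |x| ^ p = M ^ (p - 2) * x ^ 2) : x = 0 ∨ |x| = M := by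
  rw [abs_rpow_eq_abs_rpow_sub_two_mul_sq (by linarith) x] at h
  rcases eq_or_ne x 0 with hx0 | hx0
  · exact Or.inl hx0
  refine Or.inr (Real.rpow_left_injOn (by linarith : p - 2 ≠ 0) (abs_nonneg x)
    ((abs_nonneg x).trans hx) (mul_right_cancel₀ (pow_ne_zero 2 hx0) h))

lemma ae_eq_zero_or_abs_eq_of_integral_rpow_eq {Ω : Type*} [MeasurableSpace Ω] {μ : Measure Ω}
    [IsFiniteMeasure μ] {S : Ω → ℝ} {p M : ℝ} (hp : 2 < p) (hS : AEMeasurable S μ)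
    (hSM : ∀ᵐ ω ∂μ, |S ω| ≤ M)
    (h : ∫ ω, |S ω| ^ p ∂μ = M ^ (p - 2) * ∫ ω, S ω ^ 2 ∂μ) :
    ∀ᵐ ω ∂μ, S ω = 0 ∨ |S ω| = M := by
  have hp0 : 0 ≤ p := by linarith
  have hint_p : Integrable (fun ω => |S ω| ^ p) μ := by
    refine .of_bound (hS.abs.pow_const p).aestronglyMeasurable (M ^ p) ?_
    filter_upwards [hSM] with ω hω
    rw [Real.norm_eq_abs, abs_of_nonneg (by positivity)]
    exact Real.rpow_le_rpow (abs_nonneg _) hω hp0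
  have hint_sq : Integrable (fun ω => S ω ^ 2) μ := by
    refine .of_bound (hS.pow_const 2).aestronglyMeasurable (M ^ 2) ?_
    filter_upwards [hSM] with ω hω
    rw [Real.norm_eq_abs, abs_of_nonneg (by positivity), ← sq_abs]
    exact pow_le_pow_left₀ (abs_nonneg _) hω 2
  have hint_gap : Integrable (fun ω => M ^ (p - 2) * S ω ^ 2 - |S ω| ^ p) μ :=
    (hint_sq.const_mul _).sub hint_p
  have hgap : (fun ω => M ^ (p - 2) * S ω ^ 2 - |S ω| ^ p) =ᵐ[μ] 0 := by
    refine (integral_eq_zero_iff_of_nonneg_ae ?_ hint_gap).1 ?_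
    · filter_upwards [hSM] with ω hω
      exact sub_nonneg.2 (abs_rpow_le_rpow_sub_two_mul_sq hp hω)
    · rw [integral_sub (hint_sq.const_mul _) hint_p, integral_const_mul, h, sub_self]
  filter_upwards [hSM, hgap] with ω hω hgapω
  exact eq_zero_or_abs_eq_of_abs_rpow_eq hp hω (sub_eq_zero.1 hgapω).symm

lemma eq_sqrt_rpow_sub_two_of_rpow_inv_eq {x n p : ℝ} (hx : 0 ≤ x) (hn : 0 ≤ n) (hp : 0 < p)
    (h : x ^ (1 / p) = n ^ (1 / 2 - 1 / p)) : x = √n ^ (p - 2) := by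
  calc x = (x ^ (1 / p)) ^ p := by
        rw [← Real.rpow_mul hx, one_div_mul_cancel hp.ne', Real.rpow_one]
    _ = √n ^ (p - 2) := by
      rw [h, Real.sqrt_eq_rpow, ← Real.rpow_mul hn, ← Real.rpow_mul hn]
      congr 1
      field_simp

lemma eq_mul_sign_of_abs_eq {x c : ℝ} (h : |x| = c) : x = c * Real.sign x := by
  rcases lt_trichotomy x 0 with hx | rfl | hx
  · rw [Real.sign_of_neg hx, ← h, abs_of_neg hx]; ring
  · simp
  · rw [Real.sign_of_pos hx, ← h, abs_of_pos hx]; ring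

section FiniteSums

variable {ι : Type*} [Fintype ι]

lemma abs_sum_mul_le_sum_abs_of_pm_one {a ε : ι → ℝ} (hε : ∀ i, ε i = 1 ∨ ε i = -1) :
    |∑ i, a i * ε i| ≤ ∑ i, |a i| := by
  refine (Finset.abs_sum_le_sum_abs _ _).trans_eq (Finset.sum_congr rfl fun i _ => ?_)
  rcases hε i with h | h <;> simp [h]

lemma sum_abs_le_sqrt_card_mul_sqrt_sum_sq (a : ι → ℝ) :
    ∑ i, |a i| ≤ √(Fintype.card ι) * √(∑ i, a i ^ 2) := by
  simpa [mul_comm] using Real.sum_mul_le_sqrt_mul_sqrt Finset.univ (fun i => |a i|) 1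

lemma eq_of_sum_eq_of_sum_sq_eq {b : ι → ℝ} {c : ℝ} (h₁ : ∑ i, b i = Fintype.card ι * c)
    (h₂ : ∑ i, b i ^ 2 = Fintype.card ι * c ^ 2) (i : ι) : b i = c := by
  have hvar : ∑ j, (b j - c) ^ 2 = 0 := by
    have hexp : ∀ j, (b j - c) ^ 2 = b j ^ 2 - 2 * c * b j + c ^ 2 := fun j => by ring
    simp only [hexp, Finset.sum_add_distrib, Finset.sum_sub_distrib, ← Finset.mul_sum, h₁, h₂,
      Finset.sum_const, Finset.card_univ, nsmul_eq_mul]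
    ring
  have := (Finset.sum_eq_zero_iff_of_nonneg fun j _ => sq_nonneg (b j - c)).1 hvar i
    (Finset.mem_univ i)
  linarith [pow_eq_zero_iff (n := 2) two_ne_zero |>.1 this]

open scoped Classical in
lemma sum_mul_eq_two_mul_card_filter_sub_card {σ ε : ι → ℝ} (hσ : ∀ i, σ i = 1 ∨ σ i = -1)
    (hε : ∀ i, ε i = 1 ∨ ε i = -1) :
    ∑ i, σ i * ε i = 2 * (Finset.univ.filter (fun i => ε i = σ i)).card - Fintype.card ι := by
  have hterm : ∀ i, σ i * ε i = 2 * (if ε i = σ i then 1 else 0) - 1 := fun i => by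
    rcases hσ i with h | h <;> rcases hε i with h' | h' <;> norm_num [h, h']
  simp only [hterm, Finset.sum_sub_distrib, ← Finset.mul_sum, Finset.sum_boole, Finset.sum_const,
    Finset.card_univ, nsmul_eq_mul, mul_one]

open scoped Classical in
lemma sign_pattern_of_sum_mul_eq_zero_or_abs_eq_card {σ ε : ι → ℝ}
    (hσ : ∀ i, σ i = 1 ∨ σ i = -1) (hε : ∀ i, ε i = 1 ∨ ε i = -1)
    (h : ∑ i, σ i * ε i = 0 ∨ |∑ i, σ i * ε i| = Fintype.card ι) :
    (∀ i, ε i = σ i) ∨ (∀ i, ε i = -σ i) ∨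
      2 * (Finset.univ.filter (fun i => ε i = σ i)).card = Fintype.card ι := by
  rw [sum_mul_eq_two_mul_card_filter_sub_card hσ hε] at h
  set m := (Finset.univ.filter (fun i => ε i = σ i)).card with hm
  rcases h with h | h
  · exact .inr (.inr (by exact_mod_cast (by linarith : (2 * m : ℝ) = Fintype.card ι)))
  rcases abs_eq (Nat.cast_nonneg _) |>.1 h with h | h
  · have hall : m = Fintype.card ι := by exact_mod_cast (by linarith : (m : ℝ) = Fintype.card ι)
    rw [hm, ← Finset.card_univ, Finset.card_filter_eq_iff] at hall
    exact .inl fun i => hall i (Finset.mem_univ i)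
  · have hnone : m = 0 := by exact_mod_cast (by linarith : (m : ℝ) = 0)
    rw [hm, Finset.card_filter_eq_zero_iff] at hnone
    refine .inr (.inl fun i => ?_)
    have := hnone i (Finset.mem_univ i)
    rcases hσ i with h | h <;> rcases hε i with h' | h' <;> simp_all

open scoped Classical in
lemma sign_pattern_of_abs_eq_inv_sqrt_card {a ε : ι → ℝ} (ha : ∀ i, |a i| = (√(Fintype.card ι))⁻¹)
    (hε : ∀ i, ε i = 1 ∨ ε i = -1)
    (hS : ∑ i, a i * ε i = 0 ∨ |∑ i, a i * ε i| = √(Fintype.card ι)) :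
    (∀ i, ε i = Real.sign (a i)) ∨ (∀ i, ε i = -Real.sign (a i)) ∨
      2 * (Finset.univ.filter (fun i => ε i = Real.sign (a i))).card = Fintype.card ι := by
  rcases isEmpty_or_nonempty ι with hι | hι
  · exact .inl fun i => isEmptyElim i
  have hsqrt : 0 < √(Fintype.card ι : ℝ) := Real.sqrt_pos.2 (by exact_mod_cast Fintype.card_pos)
  have hsign : ∀ i, Real.sign (a i) = 1 ∨ Real.sign (a i) = -1 := fun i =>
    (Real.sign_apply_eq_of_ne_zero _ (abs_pos.1 (ha i ▸ inv_pos.2 hsqrt))).symm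
  have hsum : ∑ i, a i * ε i = (√(Fintype.card ι))⁻¹ * ∑ i, Real.sign (a i) * ε i := by
    rw [Finset.mul_sum]
    exact Finset.sum_congr rfl fun i _ => by rw [← mul_assoc, ← eq_mul_sign_of_abs_eq (ha i)]
  refine sign_pattern_of_sum_mul_eq_zero_or_abs_eq_card hsign hε ?_
  rw [hsum] at hS
  rcases hS with h | h
  · exact .inl ((mul_eq_zero.1 h).resolve_left (inv_ne_zero hsqrt.ne'))
  · rw [abs_mul, abs_of_pos (inv_pos.2 hsqrt), inv_mul_eq_iff_eq_mul₀ hsqrt.ne',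
      Real.mul_self_sqrt (Nat.cast_nonneg _)] at h
    exact .inr h

end FiniteSums

namespace IsKWiseRademacher

variable {Ω ι : Type*} [MeasurableSpace Ω] {μ : Measure Ω} [DecidableEq ι] {k : ℕ}
  {ε : ι → Ω → ℝ}

lemma measure_eq (h : IsKWiseRademacher μ k ε) (hk : 1 ≤ k) (i : ι) {s : ℝ}
    (hs : s = 1 ∨ s = -1) : μ {ω | ε i ω = s} = 2⁻¹ := by
  simpa using h.2 {i} (by simpa using hk) (fun _ => s) (fun _ => hs)

lemma measureReal_pair_eq (h : IsKWiseRademacher μ k ε) (hk : 2 ≤ k) {i j : ι} (hij : i ≠ j)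
    {s t : ℝ} (hs : s = 1 ∨ s = -1) (ht : t = 1 ∨ t = -1) :
    μ.real {ω | ε i ω = s ∧ ε j ω = t} = 4⁻¹ := by
  have hcard : ({i, j} : Finset ι).card = 2 := Finset.card_pair hij
  have := h.2 {i, j} (hcard.trans_le hk) (fun l => if l = i then s else t)
    (fun l => by split_ifs <;> assumption)
  simp only [Finset.forall_mem_insert, Finset.mem_singleton, forall_eq, if_true,
    if_neg hij.symm, hcard] at this
  rw [measureReal_def, this]
  norm_num [ENNReal.toReal_inv]

variable [IsProbabilityMeasure μ]

lemma ae_eq_one_or_neg_one (h : IsKWiseRademacher μ k ε) (hk : 1 ≤ k)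
    (i : ι) : ∀ᵐ ω ∂μ, ε i ω = 1 ∨ ε i ω = -1 := by
  have hmeas : ∀ s, MeasurableSet {ω | ε i ω = s} := fun s => h.1 i (measurableSet_singleton s)
  have hdisj : Disjoint {ω | ε i ω = 1} {ω | ε i ω = -1} :=
    Set.disjoint_left.2 fun ω h1 h2 => by norm_num [Set.mem_ofPred_eq ▸ h1] at h2
  rw [ae_iff_measure_eq (by simpa only [Set.ofPred_or] using
      ((hmeas 1).union (hmeas (-1))).nullMeasurableSet), Set.ofPred_or,
    measure_union hdisj (hmeas (-1)), h.measure_eq hk i (.inl rfl), h.measure_eq hk i (.inr rfl),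
    ENNReal.inv_two_add_inv_two, measure_univ]

lemma ae_forall_eq_one_or_neg_one [Countable ι] (h : IsKWiseRademacher μ k ε) (hk : 1 ≤ k) :
    ∀ᵐ ω ∂μ, ∀ i, ε i ω = 1 ∨ ε i ω = -1 :=
  ae_all_iff.2 (h.ae_eq_one_or_neg_one hk)

lemma integrable_mul (h : IsKWiseRademacher μ k ε) (hk : 1 ≤ k)
    (i j : ι) : Integrable (fun ω => ε i ω * ε j ω) μ := by
  refine .of_bound ((h.1 i).mul (h.1 j)).aestronglyMeasurable 1 ?_
  filter_upwards [h.ae_eq_one_or_neg_one hk i, h.ae_eq_one_or_neg_one hk j] with ω hi hj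
  rcases hi with hi | hi <;> rcases hj with hj | hj <;> norm_num [hi, hj]

lemma integral_mul (h : IsKWiseRademacher μ k ε) (hk : 2 ≤ k)
    (i j : ι) : ∫ ω, ε i ω * ε j ω ∂μ = if i = j then 1 else 0 := by
  have hk1 : 1 ≤ k := one_le_two.trans hk
  split_ifs with hij
  · subst hij
    rw [integral_congr_ae (g := fun _ => (1 : ℝ)), integral_const, probReal_univ, one_smul]
    filter_upwards [h.ae_eq_one_or_neg_one hk1 i] with ω hi
    rcases hi with hi | hi <;> norm_num [hi]
  set A : ℝ → ℝ → Set Ω := fun s t => {ω | ε i ω = s ∧ ε j ω = t}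
  have hA : ∀ s t, MeasurableSet (A s t) := fun s t =>
    (h.1 i (measurableSet_singleton s)).inter (h.1 j (measurableSet_singleton t))
  have hsimple : (fun ω => ε i ω * ε j ω) =ᵐ[μ]
      fun ω => ∑ s ∈ ({1, -1} : Finset ℝ), ∑ t ∈ ({1, -1} : Finset ℝ),
        s * t * (A s t).indicator 1 ω := by
    filter_upwards [h.ae_eq_one_or_neg_one hk1 i, h.ae_eq_one_or_neg_one hk1 j] with ω hi hj
    rcases hi with hi | hi <;> rcases hj with hj | hj <;>
      norm_num [Finset.sum_pair, A, Set.indicator, hi, hj]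
  have hint : ∀ s t, Integrable ((A s t).indicator (1 : Ω → ℝ)) μ := fun s t =>
    (integrable_const 1).indicator (hA s t)
  rw [integral_congr_ae hsimple, integral_finsetSum _ fun s _ =>
    integrable_finsetSum _ fun t _ => (hint s t).const_mul _]
  simp only [integral_finsetSum _ fun t _ => (hint _ t).const_mul _, integral_const_mul]
  have hq : ∀ s t, (s = 1 ∨ s = -1) → (t = 1 ∨ t = -1) →
      ∫ ω, (A s t).indicator (1 : Ω → ℝ) ω ∂μ = 4⁻¹ := fun s t hs ht => by
    rw [integral_indicator_one (hA s t), h.measureReal_pair_eq hk hij hs ht]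
  simp only [Finset.sum_pair (show (1 : ℝ) ≠ -1 by norm_num), hq _ _ (.inl rfl) (.inl rfl),
    hq _ _ (.inl rfl) (.inr rfl), hq _ _ (.inr rfl) (.inl rfl), hq _ _ (.inr rfl) (.inr rfl)]
  ring

variable [Fintype ι]

lemma integral_sum_mul_sq (h : IsKWiseRademacher μ k ε) (hk : 2 ≤ k) (a : ι → ℝ) :
    ∫ ω, (∑ i, a i * ε i ω) ^ 2 ∂μ = ∑ i, a i ^ 2 := by
  have hint : ∀ i j, Integrable (fun ω => a i * a j * (ε i ω * ε j ω)) μ := fun i j =>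
    (h.integrable_mul (one_le_two.trans hk) i j).const_mul _
  have hexpand : ∀ ω, (∑ i, a i * ε i ω) ^ 2 = ∑ i, ∑ j, a i * a j * (ε i ω * ε j ω) := by
    intro ω
    rw [sq, Finset.sum_mul_sum]
    exact Finset.sum_congr rfl fun i _ => Finset.sum_congr rfl fun j _ => by ring
  simp only [hexpand]
  rw [integral_finsetSum _ fun i _ => integrable_finsetSum _ fun j _ => hint i j]
  simp only [integral_finsetSum _ fun j _ => hint _ j, integral_const_mul, h.integral_mul hk,
    mul_ite, mul_one, mul_zero, Finset.sum_ite_eq, Finset.mem_univ, if_true, sq]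

lemma ae_sum_mul_eq_zero_or_abs_eq_sqrt_card (h : IsKWiseRademacher μ k ε) (hk : 2 ≤ k)
    {a : ι → ℝ} (ha : ∑ i, a i ^ 2 = 1) {p : ℝ} (hp : 2 < p)
    (heq : ∫ ω, |∑ i, a i * ε i ω| ^ p ∂μ = √(Fintype.card ι) ^ (p - 2)) :
    ∀ᵐ ω ∂μ, ∑ i, a i * ε i ω = 0 ∨ |∑ i, a i * ε i ω| = √(Fintype.card ι) := by
  have hbound : ∀ᵐ ω ∂μ, |∑ i, a i * ε i ω| ≤ √(Fintype.card ι) := by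
    filter_upwards [h.ae_forall_eq_one_or_neg_one (one_le_two.trans hk)] with ω hω
    refine (abs_sum_mul_le_sum_abs_of_pm_one hω).trans ?_
    simpa [ha] using sum_abs_le_sqrt_card_mul_sqrt_sum_sq a
  refine ae_eq_zero_or_abs_eq_of_integral_rpow_eq hp ?_ hbound ?_
  · exact (Finset.measurable_sum _ fun i _ => (h.1 i).const_mul (a i)).aemeasurable
  · rw [h.integral_sum_mul_sq hk, ha, mul_one, heq]

lemma abs_eq_inv_sqrt_card_of_ae_eq_zero_or_abs_eq (h : IsKWiseRademacher μ k ε) (hk : 2 ≤ k)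
    {a : ι → ℝ} (ha : ∑ i, a i ^ 2 = 1)
    (hS : ∀ᵐ ω ∂μ, ∑ i, a i * ε i ω = 0 ∨ |∑ i, a i * ε i ω| = √(Fintype.card ι)) (i : ι) :
    |a i| = (√(Fintype.card ι))⁻¹ := by
  have hS_ne : ¬ ∀ᵐ ω ∂μ, ∑ i, a i * ε i ω = 0 := fun h0 => by
    have := integral_congr_ae (h0.mono fun ω hω => by simp [hω] :
      (fun ω => (∑ i, a i * ε i ω) ^ 2) =ᵐ[μ] 0)
    simp [h.integral_sum_mul_sq hk, ha] at this
  obtain ⟨ω, hS0, hpm, hSω⟩ := ((Filter.not_eventually.1 hS_ne).and_eventually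
    ((h.ae_forall_eq_one_or_neg_one (one_le_two.trans hk)).and hS)).exists
  have hsqrt_pos : 0 < √(Fintype.card ι : ℝ) := hSω.resolve_left hS0 ▸ abs_pos.2 hS0
  refine eq_of_sum_eq_of_sum_sq_eq (b := fun i => |a i|) ?_ ?_ i
  · rw [← div_eq_mul_inv, Real.div_sqrt]
    refine le_antisymm ?_ (hSω.resolve_left hS0 ▸ abs_sum_mul_le_sum_abs_of_pm_one hpm)
    simpa [ha] using sum_abs_le_sqrt_card_mul_sqrt_sum_sq a
  · rw [inv_pow, Real.sq_sqrt (Nat.cast_nonneg _),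
      mul_inv_cancel₀ (Real.sqrt_pos.1 hsqrt_pos).ne']
    simpa only [sq_abs] using ha

end IsKWiseRademacher

open scoped Classical in
theorem equality_case_structure_general {Ω : Type*} [MeasurableSpace Ω]
    (μ : Measure Ω) [IsProbabilityMeasure μ] {N : ℕ} (p : ℝ) (hp : 2 < p)
    (ε' : Fin N → Ω → ℝ) (hε : IsKWiseRademacher μ 2 ε')
    (a' : Fin N → ℝ) (ha : ∑ i, (a' i) ^ 2 = 1)
    (heq : (∫ ω, |∑ i, a' i * ε' i ω| ^ p ∂μ) ^ (1 / p) =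
      (N : ℝ) ^ ((1 : ℝ) / 2 - 1 / p)) :
    (∀ i, |a' i| = (Real.sqrt N)⁻¹) ∧
    (∀ᵐ ω ∂μ, (∀ i, ε' i ω = Real.sign (a' i)) ∨ (∀ i, ε' i ω = -Real.sign (a' i)) ∨
      2 * (Finset.univ.filter (fun i => ε' i ω = Real.sign (a' i))).card = N) := by
  have hmoment : ∫ ω, |∑ i, a' i * ε' i ω| ^ p ∂μ = √(Fintype.card (Fin N)) ^ (p - 2) := by
    rw [Fintype.card_fin]
    exact eq_sqrt_rpow_sub_two_of_rpow_inv_eq (integral_nonneg fun _ => by positivity)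
      N.cast_nonneg (by linarith) heq
  have hS := hε.ae_sum_mul_eq_zero_or_abs_eq_sqrt_card le_rfl ha hp hmoment
  have habs := hε.abs_eq_inv_sqrt_card_of_ae_eq_zero_or_abs_eq le_rfl ha hS
  refine ⟨by simpa only [Fintype.card_fin] using habs, ?_⟩
  filter_upwards [hε.ae_forall_eq_one_or_neg_one one_le_two, hS] with ω hpm hSω
  simpa only [Fintype.card_fin] using sign_pattern_of_abs_eq_inv_sqrt_card habs hpm hSω

open scoped Classical in
/-- equality case. If a pairwise independent Rademacher vector `ε'` and a unit
vector `a'` achieve `(E|∑ a'ᵢε'ᵢ|^p)^{1/p} = N^{1/2-1/p}` with `N` even and `p > 2`, then all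
`|a'ᵢ|` equal `1/√N`, and almost surely either `ε'ᵢ = sgn(a'ᵢ)` for all `i`, or
`ε'ᵢ = −sgn(a'ᵢ)` for all `i`, or `ε'ᵢ = sgn(a'ᵢ)` for exactly half of the indices. -/
theorem equality_case_structure {Ω : Type*} [MeasurableSpace Ω]
    (μ : Measure Ω) [IsProbabilityMeasure μ] {N : ℕ} (hNe : Even N) (p : ℝ) (hp : 2 < p)
    (ε' : Fin N → Ω → ℝ) (hε : IsKWiseRademacher μ 2 ε')
    (a' : Fin N → ℝ) (ha : ∑ i, (a' i) ^ 2 = 1)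
    (heq : (∫ ω, |∑ i, a' i * ε' i ω| ^ p ∂μ) ^ (1 / p) =
      (N : ℝ) ^ ((1 : ℝ) / 2 - 1 / p)) :
    (∀ i, |a' i| = (Real.sqrt N)⁻¹) ∧
    (∀ᵐ ω ∂μ, (∀ i, ε' i ω = Real.sign (a' i)) ∨ (∀ i, ε' i ω = -Real.sign (a' i)) ∨
      2 * (Finset.univ.filter (fun i => ε' i ω = Real.sign (a' i))).card = N) :=
  equality_case_structure_general μ p hp ε' hε a' ha heq
end
end

section
/- Let N ≥ 6 be even, p > 2, and suppose ε' is an exchangeable, pairwise independent Rademacher vector achieving (E|∑ᵢ ε'ᵢ|^p)^{1/p} = N^{1−1/p} (equality with a = (1,...,1)). Then law(ε') = P, where P = (1/N)P_a + ((N−1)/N)P_b with P_a uniform on the two constant sign vectors and P_b uniform on balanced sign vectors. In particular P is the unique exchangeable equality case. -/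
open MeasureTheory ENNReal

noncomputable section

/-- `PA N`: uniform measure on the two constant sign vectors `(1,…,1)` and `(−1,…,−1)`. -/
def PA (N : ℕ) : Measure (Fin N → ℝ) :=
  (2 : ℝ≥0∞)⁻¹ • (Measure.dirac (fun _ => 1) + Measure.dirac (fun _ => -1))

/-- `PB N`: uniform measure on the sign vectors with exactly `N/2` coordinates equal to `1`. -/
def PB (N : ℕ) : Measure (Fin N → ℝ) :=
  ((N.choose (N / 2) : ℝ≥0∞))⁻¹ •
    ∑ T ∈ Finset.univ.filter (fun T : Finset (Fin N) => T.card = N / 2),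
      Measure.dirac (fun i => if i ∈ T then (1 : ℝ) else -1)

/-- The measure `P = (1/N) P_a + ((N-1)/N) P_b` on `{−1,1}^N`. -/
def PMeas (N : ℕ) : Measure (Fin N → ℝ) :=
  (N : ℝ≥0∞)⁻¹ • PA N + (((N : ℝ≥0∞) - 1) / N) • PB N

/-!
Write `S = ∑ i, ε'ᵢ`. The law of `ε'` is carried by sign vectors, hence is a finite combination
of point masses, and pairwise independence gives `E S = 0` and `E S² = N`. Since `|S| ≤ N` and
`p > 2`, pointwise `|S|^p ≤ N^(p-2) S²`, with equality only when `S ∈ {0, ±N}`; the hypothesis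
says `E |S|^p = N^(p-1) = N^(p-2) E S²`, so the law is carried by the two constant vectors and
the balanced ones. Exchangeability makes it uniform on the balanced vectors, and the equations
`E 1 = 1`, `E S = 0`, `E S² = N` then force the weights of `P`.
-/

open Finset

section SignVectors

variable {ι : Type*} [DecidableEq ι]

def signVec (T : Finset ι) : ι → ℝ := fun i => if i ∈ T then 1 else -1

lemma signVec_eq_one_iff {T : Finset ι} {i : ι} : signVec T i = 1 ↔ i ∈ T := by
  unfold signVec
  split_ifs with h <;> norm_num [h]

lemma signVec_injective : Function.Injective (signVec : Finset ι → ι → ℝ) := by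
  intro T T' h
  ext i
  rw [← signVec_eq_one_iff, ← signVec_eq_one_iff, h]

lemma exists_signVec_eq [Fintype ι] {x : ι → ℝ} (hx : ∀ i, x i = 1 ∨ x i = -1) :
    ∃ T, signVec T = x :=
  ⟨({i | x i = 1} : Finset ι), funext fun i => by rcases hx i with h | h <;> norm_num [signVec, h]⟩

lemma signVec_comp_symm (σ : Equiv.Perm ι) (T : Finset ι) :
    signVec T ∘ σ.symm = signVec (T.map σ.toEmbedding) := by
  ext i
  simp [signVec]

lemma sum_signVec [Fintype ι] (T : Finset ι) : ∑ i, signVec T i = 2 * #T - Fintype.card ι := by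
  have h : ∀ i, signVec T i = 2 * (if i ∈ T then 1 else 0) - 1 := by
    intro i; unfold signVec; split_ifs <;> norm_num
  simp [h, sum_sub_distrib, mul_comm]

lemma sum_signVec_eq_zero_iff [Fintype ι] {T : Finset ι} :
    ∑ i, signVec T i = 0 ↔ 2 * #T = Fintype.card ι := by
  rw [sum_signVec, sub_eq_zero]
  norm_cast

lemma abs_sum_signVec_le [Fintype ι] (T : Finset ι) :
    |∑ i, signVec T i| ≤ Fintype.card ι := by
  refine (abs_sum_le_sum_abs _ _).trans_eq ?_
  simp [signVec, apply_ite]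

lemma eq_empty_or_eq_univ_of_abs_sum_signVec_eq [Fintype ι] {T : Finset ι}
    (h : |∑ i, signVec T i| = Fintype.card ι) : T = ∅ ∨ T = univ := by
  rw [sum_signVec, abs_eq (by positivity)] at h
  rcases h with h | h
  · exact .inr (eq_univ_of_card T (by exact_mod_cast (by linarith : (#T : ℝ) = Fintype.card ι)))
  · exact .inl (card_eq_zero.1 (by exact_mod_cast (by linarith : (#T : ℝ) = 0)))

end SignVectors

section SignMeasures

variable {ι : Type*} [Fintype ι] [DecidableEq ι] {ν : Measure (ι → ℝ)}

lemma eq_sum_smul_dirac_signVec (h : ∀ᵐ x ∂ν, ∀ i, x i = 1 ∨ x i = -1) :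
    ν = ∑ T, ν {signVec T} • Measure.dirac (signVec T) := by
  have hmem : ∀ᵐ x ∂ν, x ∈ univ.image signVec :=
    h.mono fun x hx => by simpa using exists_signVec_eq hx
  exact (Measure.ae_mem_finset_iff.mp hmem).trans (sum_image signVec_injective.injOn)

lemma integral_eq_sum_signVec [IsFiniteMeasure ν] (h : ∀ᵐ x ∂ν, ∀ i, x i = 1 ∨ x i = -1)
    (f : (ι → ℝ) → ℝ) : ∫ x, f x ∂ν = ∑ T, ν.real {signVec T} * f (signVec T) := by
  conv_lhs => rw [eq_sum_smul_dirac_signVec h]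
  rw [integral_finsetSum_measure fun T _ =>
    (integrable_dirac enorm_lt_top).smul_measure (measure_ne_top _ _)]
  simp [integral_smul_measure, measureReal_def]

lemma measureReal_eq_sum_signVec [IsFiniteMeasure ν] (h : ∀ᵐ x ∂ν, ∀ i, x i = 1 ∨ x i = -1)
    {s : Set (ι → ℝ)} [DecidablePred (· ∈ s)] (hs : MeasurableSet s) :
    ν.real s = ∑ T with signVec T ∈ s, ν.real {signVec T} := by
  rw [← integral_indicator_one hs, integral_eq_sum_signVec h, sum_filter]
  simp [Set.indicator_apply]

lemma sum_measureReal_signVec [IsProbabilityMeasure ν] (h : ∀ᵐ x ∂ν, ∀ i, x i = 1 ∨ x i = -1) :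
    ∑ T, ν.real {signVec T} = 1 := by
  simpa using (integral_eq_sum_signVec h 1).symm

lemma measure_signVec_eq_of_card_eq
    (hν : ∀ σ : Equiv.Perm ι, ν.map (fun x i => x (σ i)) = ν) {T T' : Finset ι}
    (hTT' : #T = #T') : ν {signVec T} = ν {signVec T'} := by
  obtain ⟨σ, rfl⟩ := Equiv.Perm.exists_map_finset_eq T T' hTT'
  have hpre : (fun x i => x (σ i)) ⁻¹' {signVec T} = {signVec (T.map σ.toEmbedding)} := by
    ext x
    rw [Set.mem_preimage, Set.mem_singleton_iff, Set.mem_singleton_iff, ← signVec_comp_symm,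
      Equiv.eq_comp_symm]
    rfl
  rw [← hpre, ← Measure.map_apply (by fun_prop) (measurableSet_singleton _), hν]

end SignMeasures

section PairwiseMoments

variable {ι : Type*} [Fintype ι] [DecidableEq ι] {w : Finset ι → ℝ}

lemma sum_mul_signVec (hmass : ∑ T, w T = 1) (h₁ : ∀ i, ∑ T with i ∈ T, w T = 2⁻¹) (i : ι) :
    ∑ T, w T * signVec T i = 0 := by
  have key : ∀ T, w T * signVec T i = 2 * (if i ∈ T then w T else 0) - w T := by
    intro T; unfold signVec; split_ifs <;> ring
  simp only [key, sum_sub_distrib, ← mul_sum, ← sum_filter, h₁, hmass]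
  norm_num

lemma sum_mul_signVec_mul_signVec (hmass : ∑ T, w T = 1)
    (h₁ : ∀ i, ∑ T with i ∈ T, w T = 2⁻¹)
    (h₂ : ∀ i j, i ≠ j → ∑ T with i ∈ T ∧ j ∈ T, w T = 4⁻¹) (i j : ι) :
    ∑ T, w T * (signVec T i * signVec T j) = if i = j then 1 else 0 := by
  split_ifs with hij
  · subst hij
    have hsq : ∀ T, signVec T i * signVec T i = 1 := by
      intro T; unfold signVec; split_ifs <;> norm_num
    simp only [hsq, mul_one, hmass]
  · have key : ∀ T, w T * (signVec T i * signVec T j) = 4 * (if i ∈ T ∧ j ∈ T then w T else 0)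
        - 2 * (if i ∈ T then w T else 0) - 2 * (if j ∈ T then w T else 0) + w T := by
      intro T
      unfold signVec
      by_cases hi : i ∈ T <;> by_cases hj : j ∈ T <;> simp [hi, hj] <;> ring
    simp only [key, sum_add_distrib, sum_sub_distrib, ← mul_sum, ← sum_filter, h₁, h₂ i j hij,
      hmass]
    norm_num

lemma sum_mul_sum_signVec (hmass : ∑ T, w T = 1) (h₁ : ∀ i, ∑ T with i ∈ T, w T = 2⁻¹) :
    ∑ T, w T * ∑ i, signVec T i = 0 := by
  simp_rw [mul_sum]
  rw [sum_comm]
  simp [sum_mul_signVec hmass h₁]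

lemma sum_mul_sum_signVec_sq (hmass : ∑ T, w T = 1) (h₁ : ∀ i, ∑ T with i ∈ T, w T = 2⁻¹)
    (h₂ : ∀ i j, i ≠ j → ∑ T with i ∈ T ∧ j ∈ T, w T = 4⁻¹) :
    ∑ T, w T * (∑ i, signVec T i) ^ 2 = Fintype.card ι := by
  simp_rw [sq, sum_mul_sum, mul_sum]
  rw [sum_comm]
  refine (sum_congr rfl fun i _ => sum_comm).trans ?_
  simp [sum_mul_signVec_mul_signVec hmass h₁ h₂]

end PairwiseMoments

section Rademacher

variable {Ω ι : Type*} [MeasurableSpace Ω] {μ : Measure Ω}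

lemma ae_eq_one_or_eq_neg_one [IsProbabilityMeasure μ] {X : Ω → ℝ} (hX : Measurable X)
    (h₁ : μ {ω | X ω = 1} = 2⁻¹) (h₂ : μ {ω | X ω = -1} = 2⁻¹) :
    ∀ᵐ ω ∂μ, X ω = 1 ∨ X ω = -1 := by
  have hdisj : Disjoint {ω | X ω = 1} {ω | X ω = -1} :=
    Set.disjoint_left.2 fun ω (h₁ : X ω = 1) (h₂ : X ω = -1) => by norm_num [h₁] at h₂
  refine (ae_iff_measure_eq ?_).2 ?_
  · exact ((hX (measurableSet_singleton 1)).union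
      (hX (measurableSet_singleton (-1)))).nullMeasurableSet
  · rw [Set.ofPred_or, measure_union hdisj (hX (measurableSet_singleton _)), h₁, h₂,
      ENNReal.inv_two_add_inv_two, measure_univ]

variable [DecidableEq ι] {k : ℕ} {ε : ι → Ω → ℝ}

lemma IsKWiseRademacher.map_apply_pattern (hε : IsKWiseRademacher μ k ε) {s : Finset ι}
    (hs : #s ≤ k) {σ : ι → ℝ} (hσ : ∀ i, σ i = 1 ∨ σ i = -1) :
    μ.map (fun ω i => ε i ω) {x | ∀ i ∈ s, x i = σ i} = 2⁻¹ ^ #s := by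
  have hmeas : MeasurableSet {x : ι → ℝ | ∀ i ∈ s, x i = σ i} := by
    convert s.measurableSet_biInter fun i _ =>
      measurableSet_eq_fun (measurable_pi_apply i) (measurable_const (a := σ i)) using 1
    ext; simp
  rw [Measure.map_apply (measurable_pi_lambda _ hε.1) hmeas]
  exact hε.2 s hs σ hσ

lemma IsKWiseRademacher.map_apply_coord (hε : IsKWiseRademacher μ k ε) (hk : 1 ≤ k) (i : ι)
    {c : ℝ} (hc : c = 1 ∨ c = -1) : μ.map (fun ω i => ε i ω) {x | x i = c} = 2⁻¹ := by
  simpa using hε.map_apply_pattern (s := {i}) (by simpa) (σ := fun _ => c) fun _ => hc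

lemma IsKWiseRademacher.map_apply_pair (hε : IsKWiseRademacher μ k ε) (hk : 2 ≤ k) {i j : ι}
    (hij : i ≠ j) : μ.map (fun ω i => ε i ω) {x | x i = 1 ∧ x j = 1} = 4⁻¹ := by
  have h := hε.map_apply_pattern (s := {i, j}) (by simpa [hij]) (σ := fun _ => 1)
    fun _ => .inl rfl
  simp only [mem_insert, mem_singleton, forall_eq_or_imp, forall_eq, card_pair hij] at h
  rw [h, ← ENNReal.inv_pow]
  norm_num

lemma IsKWiseRademacher.isProbabilityMeasure_map [IsProbabilityMeasure μ]
    (hε : IsKWiseRademacher μ k ε) : IsProbabilityMeasure (μ.map fun ω i => ε i ω) :=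
  Measure.isProbabilityMeasure_map (measurable_pi_lambda _ hε.1).aemeasurable

lemma IsKWiseRademacher.ae_map_sign [IsProbabilityMeasure μ] [Countable ι]
    (hε : IsKWiseRademacher μ k ε) (hk : 1 ≤ k) :
    ∀ᵐ x ∂μ.map (fun ω i => ε i ω), ∀ i, x i = 1 ∨ x i = -1 := by
  have := hε.isProbabilityMeasure_map
  exact ae_all_iff.2 fun i => ae_eq_one_or_eq_neg_one (measurable_pi_apply i)
    (hε.map_apply_coord hk i (.inl rfl)) (hε.map_apply_coord hk i (.inr rfl))

variable [IsProbabilityMeasure μ] [Fintype ι]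

lemma IsKWiseRademacher.sum_measureReal_signVec_of_mem (hε : IsKWiseRademacher μ k ε)
    (hk : 1 ≤ k) (i : ι) :
    ∑ T with i ∈ T, (μ.map fun ω i => ε i ω).real {signVec T} = 2⁻¹ := by
  have := hε.isProbabilityMeasure_map
  have h := measureReal_eq_sum_signVec (hε.ae_map_sign hk) (s := {x | x i = 1})
    (measurableSet_eq_fun (measurable_pi_apply i) measurable_const)
  rw [measureReal_def, hε.map_apply_coord hk i (.inl rfl)] at h
  simpa [signVec_eq_one_iff] using h.symm

lemma IsKWiseRademacher.sum_measureReal_signVec_of_mem_pair (hε : IsKWiseRademacher μ k ε)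
    (hk : 2 ≤ k) {i j : ι} (hij : i ≠ j) :
    ∑ T with i ∈ T ∧ j ∈ T, (μ.map fun ω i => ε i ω).real {signVec T} = 4⁻¹ := by
  have := hε.isProbabilityMeasure_map
  have h := measureReal_eq_sum_signVec (hε.ae_map_sign (by omega)) (s := {x | x i = 1 ∧ x j = 1})
    ((measurableSet_eq_fun (measurable_pi_apply i) measurable_const).inter
      (measurableSet_eq_fun (measurable_pi_apply j) measurable_const))
  rw [measureReal_def, hε.map_apply_pair hk hij] at h
  simpa [signVec_eq_one_iff] using h.symm

lemma IsKWiseRademacher.sum_measureReal_signVec_mul_sum (hε : IsKWiseRademacher μ k ε)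
    (hk : 1 ≤ k) :
    ∑ T, (μ.map fun ω i => ε i ω).real {signVec T} * ∑ i, signVec T i = 0 := by
  have := hε.isProbabilityMeasure_map
  exact sum_mul_sum_signVec (sum_measureReal_signVec (hε.ae_map_sign hk))
    (hε.sum_measureReal_signVec_of_mem hk)

lemma IsKWiseRademacher.sum_measureReal_signVec_mul_sum_sq (hε : IsKWiseRademacher μ k ε)
    (hk : 2 ≤ k) :
    ∑ T, (μ.map fun ω i => ε i ω).real {signVec T} * (∑ i, signVec T i) ^ 2 =
      Fintype.card ι := by
  have := hε.isProbabilityMeasure_map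
  exact sum_mul_sum_signVec_sq (sum_measureReal_signVec (hε.ae_map_sign (by omega)))
    (hε.sum_measureReal_signVec_of_mem (by omega)) fun _ _ =>
      hε.sum_measureReal_signVec_of_mem_pair hk

end Rademacher

section EqualityCase

lemma rpow_eq_rpow_sub_two_mul_sq {t p : ℝ} (ht : 0 ≤ t) (hp : p ≠ 0) :
    t ^ p = t ^ (p - 2) * t ^ 2 := by
  rw [← Real.rpow_natCast, ← Real.rpow_add' ht (by norm_num [hp])]
  norm_num

lemma rpow_le_rpow_sub_two_mul_sq {t M p : ℝ} (ht : 0 ≤ t) (htM : t ≤ M) (hp : 2 ≤ p) :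
    t ^ p ≤ M ^ (p - 2) * t ^ 2 := by
  rw [rpow_eq_rpow_sub_two_mul_sq ht (by linarith)]
  exact mul_le_mul_of_nonneg_right (Real.rpow_le_rpow ht htM (by linarith)) (sq_nonneg t)

lemma rpow_lt_rpow_sub_two_mul_sq {t M p : ℝ} (ht : 0 < t) (htM : t < M) (hp : 2 < p) :
    t ^ p < M ^ (p - 2) * t ^ 2 := by
  rw [rpow_eq_rpow_sub_two_mul_sq ht.le (by linarith)]
  exact mul_lt_mul_of_pos_right (Real.rpow_lt_rpow ht.le htM (by linarith)) (pow_pos ht 2)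

lemma eq_zero_or_abs_eq_of_sum_mul_rpow_eq {α : Type*} {s : Finset α} {w a : α → ℝ} {M p : ℝ}
    (hw : ∀ x ∈ s, 0 ≤ w x) (ha : ∀ x ∈ s, |a x| ≤ M) (hp : 2 < p)
    (h : ∑ x ∈ s, w x * |a x| ^ p = M ^ (p - 2) * ∑ x ∈ s, w x * a x ^ 2)
    {x : α} (hx : x ∈ s) (hwx : w x ≠ 0) : a x = 0 ∨ |a x| = M := by
  have hle : ∀ y ∈ s, w y * |a y| ^ p ≤ w y * (M ^ (p - 2) * |a y| ^ 2) := fun y hy =>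
    mul_le_mul_of_nonneg_left (rpow_le_rpow_sub_two_mul_sq (abs_nonneg _) (ha y hy) hp.le)
      (hw y hy)
  have hsum : ∑ y ∈ s, w y * |a y| ^ p = ∑ y ∈ s, w y * (M ^ (p - 2) * |a y| ^ 2) := by
    simp_rw [h, sq_abs, mul_sum, mul_left_comm]
  have hx' := mul_left_cancel₀ hwx ((sum_eq_sum_iff_of_le hle).1 hsum x hx)
  by_contra hne
  rw [not_or] at hne
  exact (rpow_lt_rpow_sub_two_mul_sq (abs_pos.2 hne.1) ((ha x hx).lt_of_ne hne.2) hp).ne hx'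

variable {ι : Type*} [Fintype ι] [DecidableEq ι] [Nonempty ι] {ν : Measure (ι → ℝ)}

lemma eq_empty_or_eq_univ_or_two_mul_card_eq [IsFiniteMeasure ν]
    (h : ∀ᵐ x ∂ν, ∀ i, x i = 1 ∨ x i = -1) {p : ℝ} (hp : 2 < p)
    (h₂ : ∑ T, ν.real {signVec T} * (∑ i, signVec T i) ^ 2 = Fintype.card ι)
    (hmom : ∫ x, |∑ i, x i| ^ p ∂ν = (Fintype.card ι : ℝ) ^ (p - 1))
    {T : Finset ι} (hT : ν.real {signVec T} ≠ 0) :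
    T = ∅ ∨ T = univ ∨ 2 * #T = Fintype.card ι := by
  have hn : (Fintype.card ι : ℝ) ≠ 0 := by exact_mod_cast Fintype.card_ne_zero
  rw [integral_eq_sum_signVec h] at hmom
  have key : ∑ T, ν.real {signVec T} * |∑ i, signVec T i| ^ p =
      (Fintype.card ι : ℝ) ^ (p - 2) * ∑ T, ν.real {signVec T} * (∑ i, signVec T i) ^ 2 := by
    rw [hmom, h₂, ← Real.rpow_add_one hn]
    ring_nf
  rcases eq_zero_or_abs_eq_of_sum_mul_rpow_eq (fun T _ => measureReal_nonneg)
    (fun T _ => abs_sum_signVec_le T) hp key (mem_univ T) hT with h0 | h0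
  · exact .inr (.inr (sum_signVec_eq_zero_iff.1 h0))
  · exact (eq_empty_or_eq_univ_of_abs_sum_signVec_eq h0).elim .inl (.inr ∘ .inl)

end EqualityCase

section BalancedSupport

variable {ι : Type*} [Fintype ι]

lemma sum_eq_add_add_sum_balanced [Nonempty ι] {M : Type*} [AddCommMonoid M]
    {f : Finset ι → M} (hf : ∀ T, f T ≠ 0 → T = ∅ ∨ T = univ ∨ 2 * #T = Fintype.card ι) :
    ∑ T, f T = f ∅ + f univ + ∑ T with 2 * #T = Fintype.card ι, f T := by
  classical
  have hn := Fintype.card_pos (α := ι)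
  set B : Finset (Finset ι) := {T | 2 * #T = Fintype.card ι}
  have hempty : ∅ ∉ insert univ B := by
    simp [B, univ_nonempty.ne_empty.symm, hn.ne]
  have huniv : univ ∉ B := by
    simp [B, hn.ne']
  rw [← sum_subset (subset_univ (insert ∅ (insert univ B))), sum_insert hempty,
    sum_insert huniv, add_assoc]
  intro T _ hT
  by_contra h
  rcases hf T h with rfl | rfl | hT' <;> simp_all [B]

lemma card_filter_two_mul_card_eq {T : Finset ι} (hT : 2 * #T = Fintype.card ι) :
    #({T' | 2 * #T' = Fintype.card ι} : Finset (Finset ι)) = (Fintype.card ι).choose #T := by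
  have h : ({T' | 2 * #T' = Fintype.card ι} : Finset (Finset ι)) = powersetCard #T univ := by
    ext T'
    simp only [mem_filter, mem_univ, true_and, mem_powersetCard, subset_univ]
    omega
  rw [h, card_powersetCard, card_univ]

variable [DecidableEq ι] [Nonempty ι] {w : Finset ι → ℝ}

lemma weights_eq_of_support
    (hsupp : ∀ T, w T ≠ 0 → T = ∅ ∨ T = univ ∨ 2 * #T = Fintype.card ι)
    (hexch : ∀ T T', #T = #T' → w T = w T') (hmass : ∑ T, w T = 1)
    (h₁ : ∑ T, w T * ∑ i, signVec T i = 0)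
    (h₂ : ∑ T, w T * (∑ i, signVec T i) ^ 2 = Fintype.card ι) :
    w ∅ = (Fintype.card ι : ℝ)⁻¹ * 2⁻¹ ∧ w univ = (Fintype.card ι : ℝ)⁻¹ * 2⁻¹ ∧
      ∀ T, 2 * #T = Fintype.card ι →
        w T = ((Fintype.card ι : ℝ) - 1) / Fintype.card ι * ((Fintype.card ι).choose #T : ℝ)⁻¹ := by
  set n := Fintype.card ι with hn_def
  have hn : (n : ℝ) ≠ 0 := by exact_mod_cast Fintype.card_ne_zero
  have hsplit (g : Finset ι → ℝ) : ∑ T, w T * g T =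
      w ∅ * g ∅ + w univ * g univ + ∑ T with 2 * #T = n, w T * g T :=
    sum_eq_add_add_sum_balanced fun T h => hsupp T (left_ne_zero_of_mul h)
  have hsplit_bal (g : Finset ι → ℝ) (hg : ∀ T, 2 * #T = n → g T = 0) :
      ∑ T, w T * g T = w ∅ * g ∅ + w univ * g univ := by
    rw [hsplit, sum_eq_zero fun T hT => by rw [hg T (mem_filter.1 hT).2, mul_zero], add_zero]
  have hS_bal (T : Finset ι) (hT : 2 * #T = n) : ∑ i, signVec T i = 0 := by
    rw [sum_signVec, ← hn_def, sub_eq_zero]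
    exact_mod_cast hT
  have hS_empty : ∑ i, signVec (∅ : Finset ι) i = -n := by
    rw [sum_signVec, card_empty, ← hn_def]; ring
  have hS_univ : ∑ i, signVec (univ : Finset ι) i = n := by
    rw [sum_signVec, card_univ, ← hn_def]; ring
  have e₀ := hsplit fun _ => 1
  have e₁ := (hsplit_bal _ hS_bal).symm.trans h₁
  have e₂ := (hsplit_bal (fun T => (∑ i, signVec T i) ^ 2) fun T hT => by
    simp [hS_bal T hT]).symm.trans h₂
  simp only [mul_one, hmass] at e₀
  rw [hS_empty, hS_univ] at e₁ e₂
  have hwuniv : w univ = w ∅ := mul_left_cancel₀ hn (by linear_combination e₁)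
  have hwempty : w ∅ = (n : ℝ)⁻¹ * 2⁻¹ := by
    field_simp
    exact mul_left_cancel₀ hn (by linear_combination e₂ - hwuniv * n ^ 2)
  refine ⟨hwempty, hwuniv.trans hwempty, fun T hT => ?_⟩
  have hB : ∑ T' with 2 * #T' = n, w T' = (n.choose #T : ℝ) * w T := by
    rw [sum_congr rfl fun T' hT' => hexch T' T (by rw [mem_filter] at hT'; omega), sum_const,
      card_filter_two_mul_card_eq hT, nsmul_eq_mul]
  have hC : (n.choose #T : ℝ) ≠ 0 := by exact_mod_cast (Nat.choose_pos (by omega)).ne'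
  rw [hB, hwuniv, hwempty] at e₀
  rw [eq_mul_inv_iff_mul_eq₀ hC, eq_div_iff hn]
  field_simp at e₀
  linear_combination (-1 / 2) * e₀

end BalancedSupport

lemma PMeas_eq_sum (N : ℕ) [NeZero N] : PMeas N =
    ENNReal.ofReal ((N : ℝ)⁻¹ * 2⁻¹) • Measure.dirac (signVec ∅) +
      ENNReal.ofReal ((N : ℝ)⁻¹ * 2⁻¹) • Measure.dirac (signVec univ) +
      ∑ T with #T = N / 2, ENNReal.ofReal (((N : ℝ) - 1) / N * (N.choose (N / 2) : ℝ)⁻¹) •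
        Measure.dirac (signVec T) := by
  have hN : (0 : ℝ) < N := by exact_mod_cast Nat.pos_of_neZero N
  have hN₁ : (1 : ℝ) ≤ N := by exact_mod_cast Nat.one_le_iff_ne_zero.2 (NeZero.ne N)
  have hC : (0 : ℝ) < N.choose (N / 2) := by exact_mod_cast Nat.choose_pos (Nat.div_le_self _ _)
  have hweight : ENNReal.ofReal ((N : ℝ)⁻¹ * 2⁻¹) = (N : ℝ≥0∞)⁻¹ * 2⁻¹ := by
    rw [ENNReal.ofReal_mul (by positivity), ENNReal.ofReal_inv_of_pos hN,
      ENNReal.ofReal_inv_of_pos two_pos]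
    simp
  have hweight_bal : ENNReal.ofReal (((N : ℝ) - 1) / N * (N.choose (N / 2) : ℝ)⁻¹) =
      ((N : ℝ≥0∞) - 1) / N * (N.choose (N / 2) : ℝ≥0∞)⁻¹ := by
    rw [ENNReal.ofReal_mul (div_nonneg (sub_nonneg.2 hN₁) hN.le), ENNReal.ofReal_div_of_pos hN,
      ENNReal.ofReal_inv_of_pos hC, ENNReal.ofReal_sub _ zero_le_one]
    simp
  have hempty : signVec (∅ : Finset (Fin N)) = fun _ => -1 := by ext; simp [signVec]
  have huniv : signVec (univ : Finset (Fin N)) = fun _ => 1 := by ext; simp [signVec]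
  simp only [hweight, hweight_bal, PMeas, PA, PB, hempty, huniv, smul_add, smul_smul, smul_sum]
  exact congrArg₂ (· + ·) (add_comm _ _) rfl

lemma eq_PMeas {N : ℕ} [NeZero N] (hNe : Even N) {ν : Measure (Fin N → ℝ)} [IsFiniteMeasure ν]
    (h : ∀ᵐ x ∂ν, ∀ i, x i = 1 ∨ x i = -1)
    (hsupp : ∀ T, ν.real {signVec T} ≠ 0 → T = ∅ ∨ T = univ ∨ 2 * #T = N)
    (hexch : ∀ σ : Equiv.Perm (Fin N), ν.map (fun x i => x (σ i)) = ν)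
    (hmass : ∑ T, ν.real {signVec T} = 1)
    (h₁ : ∑ T, ν.real {signVec T} * ∑ i, signVec T i = 0)
    (h₂ : ∑ T, ν.real {signVec T} * (∑ i, signVec T i) ^ 2 = N) : ν = PMeas N := by
  obtain ⟨hempty, huniv, hbal⟩ := weights_eq_of_support (w := fun T => ν.real {signVec T})
    (by simpa using hsupp)
    (fun T T' hTT' => by simp only [measureReal_def, measure_signVec_eq_of_card_eq hexch hTT'])
    hmass h₁ (by simpa using h₂)
  simp only [Fintype.card_fin] at hempty huniv hbal
  have hsupp' (T : Finset (Fin N)) (hT : ν {signVec T} • Measure.dirac (signVec T) ≠ 0) :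
      T = ∅ ∨ T = univ ∨ 2 * #T = Fintype.card (Fin N) := by
    rw [Fintype.card_fin]
    refine hsupp T fun h0 => hT ?_
    rw [(measureReal_eq_zero_iff).1 h0, zero_smul]
  have hbal_iff (T : Finset (Fin N)) : 2 * #T = Fintype.card (Fin N) ↔ #T = N / 2 := by
    obtain ⟨m, rfl⟩ := hNe
    rw [Fintype.card_fin]
    omega
  rw [eq_sum_smul_dirac_signVec h, sum_eq_add_add_sum_balanced hsupp', PMeas_eq_sum,
    ← ofReal_measureReal, ← ofReal_measureReal, hempty, huniv]
  refine congrArg _ (sum_congr (filter_congr fun T _ => hbal_iff T) fun T hT => ?_)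
  have hT' := (mem_filter.1 hT).2
  rw [← ofReal_measureReal, hbal T (by simpa using (hbal_iff T).2 hT'), hT']

/-- for `N ≥ 6` even and `p > 2`, an exchangeable pairwise independent
Rademacher vector achieving `(E|∑ ε'ᵢ|^p)^{1/p} = N^{1-1/p}` has law `P = (1/N)P_a + ((N-1)/N)P_b`.
In particular `P` is the unique exchangeable equality case. -/
theorem exchangeable_equality_case_unique {Ω : Type*} [MeasurableSpace Ω]
    (μ : Measure Ω) [IsProbabilityMeasure μ] {N : ℕ} (hN : 6 ≤ N) (hNe : Even N)
    (p : ℝ) (hp : 2 < p)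
    (ε' : Fin N → Ω → ℝ) (hε : IsKWiseRademacher μ 2 ε')
    (hexch : ∀ σ : Equiv.Perm (Fin N),
      μ.map (fun ω => fun i => ε' (σ i) ω) = μ.map (fun ω => fun i => ε' i ω))
    (heq : (∫ ω, |∑ i, ε' i ω| ^ p ∂μ) ^ (1 / p) = (N : ℝ) ^ ((1 : ℝ) - 1 / p)) :
    μ.map (fun ω => fun i => ε' i ω) = PMeas N := by
  have : NeZero N := ⟨by omega⟩
  have hF : Measurable fun ω i => ε' i ω := measurable_pi_lambda _ hε.1
  have := hε.isProbabilityMeasure_map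
  have hsign := hε.ae_map_sign one_le_two
  have h₂ := hε.sum_measureReal_signVec_mul_sum_sq le_rfl
  have hmom : ∫ x, |∑ i, x i| ^ p ∂(μ.map fun ω i => ε' i ω) =
      (Fintype.card (Fin N) : ℝ) ^ (p - 1) := by
    rw [integral_map hF.aemeasurable (by fun_prop : Measurable fun x : Fin N → ℝ =>
      |∑ i, x i| ^ p).aestronglyMeasurable, Fintype.card_fin]
    rw [one_div, Real.rpow_inv_eq (integral_nonneg fun _ => by positivity) (by positivity)
      (by positivity)] at heq
    rw [heq, ← Real.rpow_mul (by positivity)]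
    congr 1
    field_simp
  exact eq_PMeas hNe hsign
    (fun T hT => by simpa using eq_empty_or_eq_univ_or_two_mul_card_eq hsign hp h₂ hmom hT)
    (fun σ => by rw [Measure.map_map (by fun_prop) hF]; exact hexch σ)
    (sum_measureReal_signVec hsign) (hε.sum_measureReal_signVec_mul_sum one_le_two)
    (by simpa using h₂)
end
end
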